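/- The C-ELBO factorization (Lemma 2, discrete version): with joint p(X,Z,c|W) = p(c|W;π) ∏_i p(x_i|z_i) p(z_i|c_i) and variational distribution q(Z,c|X) = ∏_i q(z_i|x_i) p(c_i|z_i), the ELBO E_q[log p(X,Z,c|W) − log q(Z,c|X)] equals −log Ω(π) + Σ_i E_{q(z_i|x_i)}[log p(x_i|z_i) − log q(z_i|x_i)] + Σ_i E_{q(z_i|x_i)} Σ_k p(k|z_i)[log p(z_i|k) + log π_k − log p(k|z_i)] + Σ_{i≠j} E_{q(z_i|x_i)} E_{q(z_j|x_j)} Σ_k p(k|z_i) p(k|z_j) W_{ij}. -/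

import Mathlib

/-- The weighting function h_i(c,W) = ∏_{j≠i} exp(W_{ij} δ_{c_i c_j}). -/
noncomputable def weightFn {N K : ℕ} (W : Fin N → Fin N → ℝ)
    (c : Fin N → Fin K) (i : Fin N) : ℝ :=
  ∏ j ∈ Finset.univ.erase i, Real.exp (W i j * (if c i = c j then 1 else 0))

/-!
Taking logarithms, the integrand `log p(X,Z,c|W) - log q(Z,c|X)` becomes the constant `-log Ω`
plus a sum of terms depending on a single site `(z_i, c_i)` plus the pair terms
`W_ij δ_{c_i c_j}`. The variational distribution is a product over the sites of the normalized
weights `q(z_i|x_i) p(c_i|z_i)` on `S × Fin K`, so a single-site term only sees the weight of its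
own site and a pair term (`i ≠ j`) the weights of its two sites. Summing out `c_i` against the
responsibilities then gives the stated form; for the pair terms, `δ_{c_i c_j}` averages to
`Σ_k p(k|z_i) p(k|z_j)`.
-/

open Finset

section ProdExpect

variable {ι T : Type*} [Fintype ι] [DecidableEq ι] [Fintype T]

noncomputable def prodExpect (w : ι → T → ℝ) (F : (ι → T) → ℝ) : ℝ :=
  ∑ g, (∏ j, w j (g j)) * F g

theorem prodExpect_eq_sum_sum {α β : Type*} [Fintype α] [Fintype β] (w : ι → α × β → ℝ)
    (F : (ι → α × β) → ℝ) :
    prodExpect w F =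
      ∑ Z : ι → α, ∑ c : ι → β, (∏ i, w i (Z i, c i)) * F (fun i => (Z i, c i)) := by
  rw [← Fintype.sum_prod_type']
  exact (Fintype.sum_equiv (Equiv.arrowProdEquivProdArrow ι (fun _ => α) (fun _ => β)).symm _ _
    fun _ => rfl).symm

variable (w : ι → T → ℝ)

theorem prodExpect_add (F G : (ι → T) → ℝ) :
    prodExpect w (fun g => F g + G g) = prodExpect w F + prodExpect w G := by
  simp only [prodExpect, mul_add, sum_add_distrib]

theorem prodExpect_sum {α : Type*} (s : Finset α) (F : α → (ι → T) → ℝ) :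
    prodExpect w (fun g => ∑ a ∈ s, F a g) = ∑ a ∈ s, prodExpect w (F a) := by
  simp only [prodExpect, mul_sum]
  exact sum_comm

variable {w}

theorem sum_pi_prod_eq_one (hw : ∀ j, ∑ t, w j t = 1) :
    ∑ g : ι → T, ∏ j, w j (g j) = 1 := by
  rw [← Fintype.prod_sum]
  simp [hw]

theorem prodExpect_const (hw : ∀ j, ∑ t, w j t = 1) (c : ℝ) :
    prodExpect w (fun _ => c) = c := by
  rw [prodExpect, ← sum_mul, sum_pi_prod_eq_one hw, one_mul]

theorem prodExpect_eq_sum_mul_prodExpect_ne (i : ι) (F : (ι → T) → ℝ) :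
    prodExpect w F = ∑ t, w i t * prodExpect (fun j : {j // j ≠ i} => w j)
      (fun h => F ((Equiv.funSplitAt i T).symm (t, h))) := by
  rw [prodExpect, ← (Equiv.funSplitAt i T).symm.sum_comp, Fintype.sum_prod_type]
  refine sum_congr rfl fun t _ => ?_
  rw [prodExpect, mul_sum]
  refine sum_congr rfl fun h _ => ?_
  rw [Fintype.prod_eq_mul_prod_subtype_ne _ i]
  simp only [Equiv.funSplitAt_symm_apply, dite_true, mul_assoc]
  congr 2
  exact prod_congr rfl fun j _ => by rw [dif_neg j.2]

theorem prodExpect_eval (hw : ∀ j, ∑ t, w j t = 1) (i : ι) (f : T → ℝ) :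
    prodExpect w (fun g => f (g i)) = ∑ t, w i t * f t := by
  rw [prodExpect_eq_sum_mul_prodExpect_ne i]
  refine sum_congr rfl fun t _ => ?_
  simp only [Equiv.funSplitAt_symm_apply, dite_true]
  rw [prodExpect_const (w := fun j : {j // j ≠ i} => w j) fun j => hw j]

theorem prodExpect_eval₂ (hw : ∀ j, ∑ t, w j t = 1) {i j : ι} (hij : i ≠ j)
    (f : T → T → ℝ) :
    prodExpect w (fun g => f (g i) (g j)) = ∑ t, w i t * ∑ t', w j t' * f t t' := by
  rw [prodExpect_eq_sum_mul_prodExpect_ne i]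
  refine sum_congr rfl fun t _ => ?_
  simp only [Equiv.funSplitAt_symm_apply, dite_true, dif_neg hij.symm]
  rw [prodExpect_eval (w := fun j : {j // j ≠ i} => w j) (fun j => hw j) ⟨j, hij.symm⟩]

end ProdExpect

section Responsibilities

variable {S K : Type*} [Fintype S] [Fintype K] (r : K → S → ℝ)

theorem sum_sum_mul_responsibility_add (hr : ∀ z, ∑ k, r k z = 1) (q f : S → ℝ)
    (g : S → K → ℝ) :
    ∑ z, ∑ k, q z * r k z * (f z + g z k) =
      ∑ z, q z * f z + ∑ z, q z * ∑ k, r k z * g z k := by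
  rw [← sum_add_distrib]
  refine sum_congr rfl fun z _ => ?_
  simp only [mul_add, sum_add_distrib, ← sum_mul, ← mul_sum, hr, mul_one]
  simp only [mul_sum, mul_assoc]

theorem sum_sum_mul_responsibility_sum_sum_ite [DecidableEq K] (q q' : S → ℝ) (C : ℝ) :
    ∑ z, ∑ k, q z * r k z * ∑ z', ∑ k', q' z' * r k' z' * (C * if k = k' then 1 else 0) =
      ∑ z, ∑ z', q z * q' z' * ∑ k, r k z * r k z' * C := by
  simp only [mul_ite, mul_one, mul_zero, sum_ite_eq, mem_univ, if_true]
  refine sum_congr rfl fun z _ => ?_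
  simp only [mul_sum]
  rw [sum_comm]
  exact sum_congr rfl fun _ _ => sum_congr rfl fun _ _ => by ring

end Responsibilities

theorem log_prod_mul {ι : Type*} [Fintype ι] {f g : ι → ℝ} (hf : ∀ i, 0 < f i)
    (hg : ∀ i, 0 < g i) :
    Real.log (∏ i, f i * g i) = ∑ i, Real.log (f i) + ∑ i, Real.log (g i) := by
  rw [Real.log_prod fun i _ => (mul_pos (hf i) (hg i)).ne', ← sum_add_distrib]
  exact sum_congr rfl fun i _ => Real.log_mul (hf i).ne' (hg i).ne'

theorem weightFn_pos {N K : ℕ} (W : Fin N → Fin N → ℝ) (c : Fin N → Fin K) (i : Fin N) :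
    0 < weightFn W c i :=
  prod_pos fun _ _ => Real.exp_pos _

theorem log_weightFn {N K : ℕ} (W : Fin N → Fin N → ℝ) (c : Fin N → Fin K) (i : Fin N) :
    Real.log (weightFn W c i) = ∑ j ∈ univ.erase i, W i j * (if c i = c j then 1 else 0) := by
  rw [weightFn, ← Real.exp_sum, Real.log_exp]

theorem log_joint_sub_log_variational {N K : ℕ} {S : Type*} {px : Fin N → S → ℝ}
    {pz : S → Fin K → ℝ} {q : Fin N → S → ℝ} {r : Fin K → S → ℝ} {π : Fin K → ℝ}
    (W : Fin N → Fin N → ℝ) {Ω : ℝ} (hpx : ∀ i z, 0 < px i z) (hpz : ∀ z k, 0 < pz z k)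
    (hq : ∀ i z, 0 < q i z) (hr : ∀ k z, 0 < r k z) (hπ : ∀ k, 0 < π k) (hΩ : 0 < Ω)
    (Z : Fin N → S) (c : Fin N → Fin K) :
    Real.log ((1 / Ω * ∏ i, π (c i) * weightFn W c i) * ∏ i, px i (Z i) * pz (Z i) (c i)) -
        Real.log (∏ i, q i (Z i) * r (c i) (Z i)) =
      -Real.log Ω +
        ∑ i, ((Real.log (px i (Z i)) - Real.log (q i (Z i))) +
          (Real.log (pz (Z i) (c i)) + Real.log (π (c i)) - Real.log (r (c i) (Z i)))) +
        ∑ i, ∑ j ∈ univ.erase i, W i j * (if c i = c j then 1 else 0) := by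
  have hprior : 0 < ∏ i, π (c i) * weightFn W c i :=
    prod_pos fun i _ => mul_pos (hπ _) (weightFn_pos W c i)
  have hlik : 0 < ∏ i, px i (Z i) * pz (Z i) (c i) :=
    prod_pos fun i _ => mul_pos (hpx _ _) (hpz _ _)
  have hΩinv : 0 < 1 / Ω := one_div_pos.2 hΩ
  rw [Real.log_mul (mul_pos hΩinv hprior).ne' hlik.ne', Real.log_mul hΩinv.ne' hprior.ne',
    one_div, Real.log_inv, log_prod_mul (fun i => hπ (c i)) (fun i => weightFn_pos W c i),
    log_prod_mul (fun i => hpx i (Z i)) (fun i => hpz (Z i) (c i)),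
    log_prod_mul (fun i => hq i (Z i)) (fun i => hr (c i) (Z i))]
  simp only [log_weightFn, sum_add_distrib, sum_sub_distrib]
  ring

theorem celbo_factorization_general {N K : ℕ} {S : Type*} [Fintype S]
    (hK : 0 < K)
    (px : Fin N → S → ℝ)      -- p(x_i | z_i)
    (pz : S → Fin K → ℝ)      -- p(z | k)
    (q : Fin N → S → ℝ)       -- q(z_i | x_i)
    (r : Fin K → S → ℝ)       -- responsibilities p(k | z)
    (π : Fin K → ℝ) (W : Fin N → Fin N → ℝ)
    (hpx : ∀ i z, 0 < px i z) (hpz : ∀ z k, 0 < pz z k)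
    (hq : ∀ i z, 0 < q i z) (hqsum : ∀ i, ∑ z, q i z = 1)
    (hr : ∀ k z, 0 < r k z) (hrsum : ∀ z, ∑ k, r k z = 1)
    (hπ : ∀ k, 0 < π k)
    (Ω : ℝ)
    (hΩ : Ω = ∑ c : Fin N → Fin K, ∏ i, π (c i) * weightFn W c i) :
    (∑ Z : Fin N → S, ∑ c : Fin N → Fin K,
        (∏ i, q i (Z i) * r (c i) (Z i)) *
          (Real.log ((1 / Ω * ∏ i, π (c i) * weightFn W c i) *
              ∏ i, px i (Z i) * pz (Z i) (c i)) -
            Real.log (∏ i, q i (Z i) * r (c i) (Z i)))) =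
      -Real.log Ω +
      (∑ i, ∑ z, q i z * (Real.log (px i z) - Real.log (q i z))) +
      (∑ i, ∑ z, q i z * ∑ k, r k z *
          (Real.log (pz z k) + Real.log (π k) - Real.log (r k z))) +
      (∑ i, ∑ j ∈ Finset.univ.erase i, ∑ z, ∑ z', q i z * q j z' *
          ∑ k, r k z * r k z' * W i j) := by
  set w : Fin N → S × Fin K → ℝ := fun i t => q i t.1 * r t.2 t.1
  set a : Fin N → S × Fin K → ℝ := fun i t =>
    (Real.log (px i t.1) - Real.log (q i t.1)) +
      (Real.log (pz t.1 t.2) + Real.log (π t.2) - Real.log (r t.2 t.1))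
  set b : Fin N → Fin N → S × Fin K → S × Fin K → ℝ := fun i j t t' =>
    W i j * if t.2 = t'.2 then 1 else 0
  have hw : ∀ i, ∑ t, w i t = 1 := fun i => by
    simp only [w, Fintype.sum_prod_type, ← mul_sum, hrsum, mul_one, hqsum]
  have hΩpos : 0 < Ω := by
    have : Nonempty (Fin K) := ⟨⟨0, hK⟩⟩
    rw [hΩ]
    exact sum_pos (fun c _ => prod_pos fun i _ => mul_pos (hπ _) (weightFn_pos W c i))
      univ_nonempty
  calc _ = prodExpect w (fun g =>
          -Real.log Ω + ∑ i, a i (g i) + ∑ i, ∑ j ∈ univ.erase i, b i j (g i) (g j)) := by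
        rw [prodExpect_eq_sum_sum]
        simp only [log_joint_sub_log_variational W hpx hpz hq hr hπ hΩpos]
        rfl
    _ = -Real.log Ω + ∑ i, ∑ t, w i t * a i t +
          ∑ i, ∑ j ∈ univ.erase i, ∑ t, w i t * ∑ t', w j t' * b i j t t' := by
        simp only [prodExpect_add, prodExpect_const hw, prodExpect_sum]
        rw [sum_congr rfl fun i _ => prodExpect_eval hw i (a i),
          sum_congr rfl fun i _ => sum_congr rfl fun j hj =>
            prodExpect_eval₂ hw (ne_of_mem_erase hj).symm (b i j)]
    _ = _ := by
        simp only [w, a, b, Fintype.sum_prod_type, sum_sum_mul_responsibility_add r hrsum,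
          sum_sum_mul_responsibility_sum_sum_ite r, sum_add_distrib, add_assoc]

/-- the C-ELBO factorization of Lemma 2 (finite discrete version).
Joint: p(X,Z,c|W) = p(c|W;π) ∏_i p(x_i|z_i) p(z_i|c_i), with
p(c|W;π) = (1/Ω(π)) ∏_i π_{c_i} h_i(c,W).
Variational: q(Z,c|X) = ∏_i q(z_i|x_i) p(c_i|z_i). -/
theorem celbo_factorization {N K : ℕ} {S : Type*} [Fintype S]
    (hN : 0 < N) (hK : 0 < K)
    (px : Fin N → S → ℝ)      -- p(x_i | z_i)
    (pz : S → Fin K → ℝ)      -- p(z | k)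
    (q : Fin N → S → ℝ)       -- q(z_i | x_i)
    (r : Fin K → S → ℝ)       -- responsibilities p(k | z)
    (π : Fin K → ℝ) (W : Fin N → Fin N → ℝ)
    (hpx : ∀ i z, 0 < px i z) (hpz : ∀ z k, 0 < pz z k)
    (hq : ∀ i z, 0 < q i z) (hqsum : ∀ i, ∑ z, q i z = 1)
    (hr : ∀ k z, 0 < r k z) (hrsum : ∀ z, ∑ k, r k z = 1)
    (hπ : ∀ k, 0 < π k) (hW : ∀ i j, W i j = W j i)
    (Ω : ℝ)
    (hΩ : Ω = ∑ c : Fin N → Fin K, ∏ i, π (c i) * weightFn W c i) :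
    (∑ Z : Fin N → S, ∑ c : Fin N → Fin K,
        (∏ i, q i (Z i) * r (c i) (Z i)) *
          (Real.log ((1 / Ω * ∏ i, π (c i) * weightFn W c i) *
              ∏ i, px i (Z i) * pz (Z i) (c i)) -
            Real.log (∏ i, q i (Z i) * r (c i) (Z i)))) =
      -Real.log Ω +
      (∑ i, ∑ z, q i z * (Real.log (px i z) - Real.log (q i z))) +
      (∑ i, ∑ z, q i z * ∑ k, r k z *
          (Real.log (pz z k) + Real.log (π k) - Real.log (r k z))) +
      (∑ i, ∑ j ∈ Finset.univ.erase i, ∑ z, ∑ z', q i z * q j z' *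
          ∑ k, r k z * r k z' * W i j) :=
  celbo_factorization_general hK px pz q r π W hpx hpz hq hqsum hr hrsum hπ Ω hΩ
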